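/- Let ν be an atomless probability measure on a measurable space Ω, let C_1, …, C_m be a finite measurable partition of Ω (pairwise disjoint measurable sets whose union is Ω), and let n ∈ ℕ. Then there exists a partition of Ω into measurable sets D_1, …, D_{2^n}, pairwise disjoint with union Ω and ν(D_k) = 2^{-n} for all k, such that for every j ∈ {1, …, m}, the number of indices k with ν(D_k \ C_j) = 0 is at least ⌊2^n · ν(C_j)⌋. -/

import Mathlib

/-!
By Sierpiński's theorem an atomless finite measure takes every value in `[0, ν A]` on measurable
subsets of `A`, so a measurable set can be cut into pieces of any prescribed measures summing to
its own. Since `∑ j ⌊2ⁿ ν(C_j)⌋ ≤ 2ⁿ`, one can reserve `⌊2ⁿ ν(C_j)⌋` of the `2ⁿ` slots for each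
`C_j` and cut a piece of measure `2⁻ⁿ` out of `C_j` for each of them. Cutting the rest of `Ω` into
the amounts still missing from each slot fills every slot up to measure exactly `2⁻ⁿ`.
-/

open MeasureTheory
open scoped ENNReal

attribute [local instance] Classical.propDecidable

open Set
open scoped Finset

/- Not Mathlib's `NoAtoms`, which only asks singletons to be null. -/
def IsAtomless {Ω : Type*} [MeasurableSpace Ω] (ν : Measure Ω) : Prop :=
  ∀ A : Set Ω, MeasurableSet A → 0 < ν A → ∃ B ⊆ A, MeasurableSet B ∧ 0 < ν B ∧ ν B < ν A

theorem ENNReal.exists_forall_le_two_mul {α : Type*} [Nonempty α] (f : α → ℝ≥0∞)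
    (hf : ⨆ a, f a ≠ ∞) : ∃ a, ∀ b, f b ≤ 2 * f a := by
  by_cases h0 : ⨆ a, f a = 0
  · exact ⟨Classical.arbitrary α, fun b => by simp [ENNReal.iSup_eq_zero.mp h0 b]⟩
  · obtain ⟨a, ha⟩ := lt_iSup_iff.mp (ENNReal.half_lt_self h0 hf)
    refine ⟨a, fun b => (le_iSup f b).trans ?_⟩
    calc ⨆ a, f a = 2 * ((⨆ a, f a) / 2) := (ENNReal.mul_div_cancel' (by simp) (by simp)).symm
      _ ≤ 2 * f a := by gcongr

theorem pairwise_disjoint_iUnion_of_subset {α ι κ : Type*} {C : ι → Set α}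
    (hC : Pairwise (Function.onFun Disjoint C)) {E : ι → κ → Set α} (hEC : ∀ j k, E j k ⊆ C j)
    (hE : ∀ j, Pairwise (Function.onFun Disjoint (E j))) :
    Pairwise (Function.onFun Disjoint fun k => ⋃ j, E j k) := by
  intro k l hkl
  simp only [Function.onFun, disjoint_iUnion_left, disjoint_iUnion_right]
  intro i j
  rcases eq_or_ne i j with rfl | hij
  · exact hE i hkl
  · exact (hC hij.symm).mono (hEC j k) (hEC i l)

theorem exists_option_card_filter_eq {ι κ : Type*} [Fintype ι] [Fintype κ] (a : ι → ℕ)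
    (ha : ∑ j, a j ≤ Fintype.card κ) : ∃ σ : κ → Option ι, ∀ j, #{k | σ k = some j} = a j := by
  obtain ⟨e⟩ : Nonempty ((Σ j, Fin (a j)) ↪ κ) :=
    Function.Embedding.nonempty_of_card_le (by simpa using ha)
  refine ⟨fun k => (Function.partialInv e k).map Sigma.fst, fun j => ?_⟩
  have hfiber : ({k | (Function.partialInv e k).map Sigma.fst = some j} : Finset κ) =
      Finset.univ.map ((Function.Embedding.sigmaMk j).trans e) := by
    ext k
    simp only [Finset.mem_filter, Finset.mem_univ, true_and, Finset.mem_map,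
      Option.map_eq_some_iff, e.injective.isPartialInv _ k]
    constructor
    · rintro ⟨⟨j, i⟩, hi, rfl⟩
      exact ⟨i, hi⟩
    · rintro ⟨i, hi⟩
      exact ⟨⟨j, i⟩, hi, rfl⟩
  rw [hfiber, Finset.card_map, Finset.card_univ, Fintype.card_fin]

section Greedy

variable {Ω : Type*} [MeasurableSpace Ω] {ν : Measure Ω}

theorem exists_subset_sdiff_forall_le_two_mul {A B : Set Ω} {r : ℝ≥0∞} (hr : r ≠ ∞)
    (hBr : ν B ≤ r) :
    ∃ C ⊆ A \ B, MeasurableSet C ∧ ν (B ∪ C) ≤ r ∧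
      ∀ C' ⊆ A \ B, MeasurableSet C' → ν (B ∪ C') ≤ r → ν C' ≤ 2 * ν C := by
  let Admissible := {C : Set Ω // C ⊆ A \ B ∧ MeasurableSet C ∧ ν (B ∪ C) ≤ r}
  have : Nonempty Admissible := ⟨⟨∅, empty_subset _, .empty, by simpa using hBr⟩⟩
  have hfin : ⨆ C : Admissible, ν C.1 ≠ ∞ :=
    ne_top_of_le_ne_top hr (iSup_le fun C => (measure_mono subset_union_right).trans C.2.2.2)
  obtain ⟨⟨C, hCA, hC, hCr⟩, hmax⟩ := ENNReal.exists_forall_le_two_mul _ hfin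
  exact ⟨C, hCA, hC, hCr, fun C' hC'A hC' hC'r => hmax ⟨C', hC'A, hC', hC'r⟩⟩

theorem exists_two_mul_measure_sdiff_lt {S : ℕ → Set Ω} (hS : Monotone S)
    (hSm : ∀ k, MeasurableSet (S k)) {r : ℝ≥0∞} (hr : r ≠ ∞) (hSr : ∀ k, ν (S k) ≤ r)
    {c : ℝ≥0∞} (hc : c ≠ 0) : ∃ k, 2 * ν (S (k + 1) \ S k) < c := by
  by_contra! hgap
  have hlinear : ∀ N : ℕ, N * c ≤ 2 * ν (S N) := by
    intro N
    induction N with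
    | zero => simp
    | succ N ih =>
      calc ((N + 1 : ℕ) : ℝ≥0∞) * c = N * c + c := by push_cast; ring
        _ ≤ 2 * ν (S N) + 2 * ν (S (N + 1) \ S N) := add_le_add ih (hgap N)
        _ = 2 * ν (S (N + 1)) := by
          rw [← mul_add, measure_add_sdiff (hSm N).nullMeasurableSet,
            union_eq_right.mpr (hS N.le_succ)]
  obtain ⟨N, hN⟩ := ENNReal.exists_nat_mul_gt hc (b := 2 * r) (by finiteness)
  exact hN.not_ge ((hlinear N).trans (by gcongr; exact hSr N))

end Greedy

namespace IsAtomless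

variable {Ω : Type*} [MeasurableSpace Ω] {ν : Measure Ω} [IsFiniteMeasure ν]

/- If `s` is the infimum of the positive measures of subsets of `A` and `s > 0`, a subset of
measure `< 2 s` splits into two subsets of positive measure, one of which has measure `< s`. -/
theorem exists_subset_measure_pos_lt (hν : IsAtomless ν) {A : Set Ω} (hA : MeasurableSet A)
    (hA0 : 0 < ν A) {ε : ℝ≥0∞} (hε : 0 < ε) : ∃ B ⊆ A, MeasurableSet B ∧ 0 < ν B ∧ ν B < ε := by
  set s := ⨅ (B : Set Ω) (_ : B ⊆ A ∧ MeasurableSet B ∧ 0 < ν B), ν B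
  have hs_le : ∀ B ⊆ A, MeasurableSet B → 0 < ν B → s ≤ ν B :=
    fun B hBA hB hB0 => iInf₂_le B ⟨hBA, hB, hB0⟩
  suffices hs : s = 0 by
    have hsε : s < ε := by rwa [hs]
    simpa only [s, iInf_lt_iff, exists_prop, and_assoc] using hsε
  by_contra hs
  have hs_top : s ≠ ∞ := ne_top_of_le_ne_top (measure_ne_top ν A) (hs_le A subset_rfl hA hA0)
  obtain ⟨B, ⟨hBA, hB, hB0⟩, hB2⟩ : ∃ B, (B ⊆ A ∧ MeasurableSet B ∧ 0 < ν B) ∧ ν B < s + s := by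
    simpa only [s, iInf_lt_iff, exists_prop] using ENNReal.lt_add_right hs_top hs
  obtain ⟨B', hB'B, hB', hB'0, hB'lt⟩ := hν B hB hB0
  have hdiff0 : 0 < ν (B \ B') := by
    rw [measure_sdiff hB'B hB'.nullMeasurableSet (measure_ne_top ν B')]
    exact tsub_pos_of_lt hB'lt
  have : s + s ≤ ν B :=
    calc s + s ≤ ν B' + ν (B \ B') :=
        add_le_add (hs_le B' (hB'B.trans hBA) hB' hB'0)
          (hs_le _ (sdiff_subset.trans hBA) (hB.diff hB') hdiff0)
      _ = ν B := by rw [measure_add_sdiff hB'.nullMeasurableSet, union_eq_right.mpr hB'B]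
  exact hB2.not_ge this

/- Sierpiński's theorem, by a greedy exhaustion: each step adds a set of at least half the largest
admissible measure. If the limit fell short of `r`, a small set of positive measure would stay
admissible forever, and the measures would grow without bound. -/
theorem exists_subset_measure_eq (hν : IsAtomless ν) {A : Set Ω} (hA : MeasurableSet A)
    {r : ℝ≥0∞} (hr : r ≤ ν A) : ∃ B ⊆ A, MeasurableSet B ∧ ν B = r := by
  have hr_top : r ≠ ∞ := ne_top_of_le_ne_top (measure_ne_top ν A) hr
  let S := {B : Set Ω // B ⊆ A ∧ MeasurableSet B ∧ ν B ≤ r}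
  have step : ∀ B : S, ∃ B' : S, B.1 ⊆ B'.1 ∧
      ∀ C ⊆ A \ B.1, MeasurableSet C → ν (B.1 ∪ C) ≤ r → ν C ≤ 2 * ν (B'.1 \ B.1) := by
    rintro ⟨B, hBA, hB, hBr⟩
    obtain ⟨C, hCA, hC, hBCr, hmax⟩ := exists_subset_sdiff_forall_le_two_mul (A := A) hr_top hBr
    refine ⟨⟨B ∪ C, union_subset hBA (hCA.trans sdiff_subset), hB.union hC, hBCr⟩,
      subset_union_left, ?_⟩
    rwa [union_sdiff_left, (disjoint_sdiff_left.mono_left hCA).sdiff_eq_left]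
  choose next hsub hgrow using step
  let seq : ℕ → S := fun k => next^[k] ⟨∅, empty_subset _, .empty, by simp⟩
  have seq_succ : ∀ k, seq (k + 1) = next (seq k) := fun k => Function.iterate_succ_apply' ..
  have hmono : Monotone fun k => (seq k).1 :=
    monotone_nat_of_le_succ fun k => seq_succ k ▸ hsub (seq k)
  set B := ⋃ k, (seq k).1
  have hB : MeasurableSet B := .iUnion fun k => (seq k).2.2.1
  have hBr : ν B ≤ r := by
    rw [hmono.measure_iUnion]
    exact iSup_le fun k => (seq k).2.2.2
  refine ⟨B, iUnion_subset fun k => (seq k).2.1, hB, ?_⟩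
  by_contra hne
  have hlt : ν B < r := hBr.lt_of_ne hne
  have hAB : 0 < ν (A \ B) := by
    rw [measure_sdiff (iUnion_subset fun k => (seq k).2.1) hB.nullMeasurableSet
      (measure_ne_top ν B)]
    exact tsub_pos_of_lt (hlt.trans_le hr)
  obtain ⟨D, hDA, hD, hD0, hDr⟩ :=
    hν.exists_subset_measure_pos_lt (hA.diff hB) hAB (tsub_pos_of_lt hlt)
  have hgap : ∀ k, ν D ≤ 2 * ν ((seq (k + 1)).1 \ (seq k).1) := fun k => by
    rw [seq_succ]
    have hkB : (seq k).1 ⊆ B := subset_iUnion (fun k => (seq k).1) k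
    refine hgrow _ D (hDA.trans (sdiff_subset_sdiff_right hkB)) hD ?_
    calc ν ((seq k).1 ∪ D) ≤ ν B + (r - ν B) :=
          (measure_union_le _ _).trans (add_le_add (measure_mono hkB) hDr.le)
      _ = r := add_tsub_cancel_of_le hBr
  obtain ⟨k, hk⟩ := exists_two_mul_measure_sdiff_lt hmono (fun k => (seq k).2.2.1) hr_top
    (fun k => (seq k).2.2.2) hD0.ne'
  exact hk.not_ge (hgap k)

theorem exists_partition_measure_eq (hν : IsAtomless ν) {ι : Type*} {s : Finset ι}
    (hs : s.Nonempty) (r : ι → ℝ≥0∞) {A : Set Ω} (hA : MeasurableSet A)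
    (hr : ∑ i ∈ s, r i = ν A) :
    ∃ E : ι → Set Ω, (∀ i, MeasurableSet (E i)) ∧ (∀ i, E i ⊆ A) ∧
      Pairwise (Function.onFun Disjoint E) ∧ ⋃ i ∈ s, E i = A ∧ ∀ i ∈ s, ν (E i) = r i := by
  induction hs using Finset.Nonempty.cons_induction generalizing A with
  | singleton a =>
    refine ⟨Function.update (fun _ => ∅) a A, fun i => ?_, fun i => ?_, fun i j hij => ?_,
      by simp, by simpa using hr.symm⟩
    · rw [Function.update_apply]; split_ifs; exacts [hA, .empty]
    · rw [Function.update_apply]; split_ifs; exacts [subset_rfl, empty_subset A]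
    · rcases eq_or_ne i a with rfl | hi
      · simp [Function.onFun, hij.symm]
      · simp [Function.onFun, hi]
  | cons a s ha hs ih =>
    rw [Finset.sum_cons] at hr
    obtain ⟨B, hBA, hB, hBr⟩ := hν.exists_subset_measure_eq hA (hr ▸ le_self_add)
    have hrest : ∑ i ∈ s, r i = ν (A \ B) := by
      rw [measure_sdiff hBA hB.nullMeasurableSet (measure_ne_top ν B), ← hr, hBr,
        ENNReal.add_sub_cancel_left (hBr ▸ measure_ne_top ν B)]
    obtain ⟨E, hEm, hEA, hEd, hEU, hEr⟩ := ih (hA.diff hB) hrest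
    have hBE : ∀ i, Disjoint B (E i) := fun i => disjoint_sdiff_right.mono_right (hEA i)
    refine ⟨Function.update E a B, fun i => ?_, fun i => ?_, fun i j hij => ?_, ?_, ?_⟩
    · rw [Function.update_apply]; split_ifs; exacts [hB, hEm i]
    · rw [Function.update_apply]; split_ifs; exacts [hBA, (hEA i).trans sdiff_subset]
    · rcases eq_or_ne i a with rfl | hi
      · simpa [Function.onFun, hij.symm] using hBE j
      rcases eq_or_ne j a with rfl | hj
      · simpa [Function.onFun, hi] using (hBE i).symm
      · simpa [Function.onFun, hi, hj] using hEd hij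
    · rw [Finset.cons_eq_insert, Finset.set_biUnion_insert_update _ ha, hEU,
        union_sdiff_cancel hBA]
    · intro i hi
      rcases Finset.mem_cons.mp hi with rfl | hi
      · simpa using hBr
      · simpa [ne_of_mem_of_not_mem hi ha] using hEr i hi

theorem exists_pairwise_disjoint_subset_measure_eq (hν : IsAtomless ν) {κ : Type*} [Fintype κ]
    (r : κ → ℝ≥0∞) {A : Set Ω} (hA : MeasurableSet A) (hr : ∑ k, r k ≤ ν A) :
    ∃ E : κ → Set Ω, (∀ k, MeasurableSet (E k)) ∧ (∀ k, E k ⊆ A) ∧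
      Pairwise (Function.onFun Disjoint E) ∧ ∀ k, ν (E k) = r k := by
  obtain ⟨E, hEm, hEA, hEd, -, hEr⟩ := hν.exists_partition_measure_eq Finset.univ_nonempty
    (fun o : Option κ => o.elim (ν A - ∑ k, r k) r) hA
    (by rw [Fintype.sum_option]; exact tsub_add_cancel_of_le hr)
  exact ⟨E ∘ some, fun k => hEm _, fun k => hEA _, hEd.comp_of_injective (Option.some_injective _),
    fun k => hEr _ (Finset.mem_univ _)⟩

theorem exists_partition_superset_measure_eq (hν : IsAtomless ν) {κ : Type*} [Fintype κ]
    [Nonempty κ] {G : κ → Set Ω} (hGm : ∀ k, MeasurableSet (G k))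
    (hGd : Pairwise (Function.onFun Disjoint G)) {w : ℝ≥0∞} (hGw : ∀ k, ν (G k) ≤ w)
    (hw : Fintype.card κ * w = ν univ) :
    ∃ D : κ → Set Ω, (∀ k, MeasurableSet (D k)) ∧ Pairwise (Function.onFun Disjoint D) ∧
      ⋃ k, D k = univ ∧ (∀ k, G k ⊆ D k) ∧ ∀ k, ν (D k) = w := by
  have hG : MeasurableSet (⋃ k, G k) := .iUnion hGm
  have hrest : ∑ k, (w - ν (G k)) = ν (⋃ k, G k)ᶜ := by
    refine (ENNReal.add_right_inj (measure_ne_top ν (⋃ k, G k))).mp ?_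
    rw [measure_add_measure_compl hG, measure_iUnion hGd hGm, tsum_fintype,
      ← Finset.sum_add_distrib, ← hw]
    simp [add_tsub_cancel_of_le (hGw _)]
  obtain ⟨F, hFm, hFG, hFd, hFU, hFw⟩ :=
    hν.exists_partition_measure_eq Finset.univ_nonempty _ hG.compl hrest
  have hGF : ∀ k l, Disjoint (G k) (F l) := fun k l =>
    (disjoint_compl_right.mono_left (subset_iUnion G k)).mono_right (hFG l)
  refine ⟨fun k => G k ∪ F k, fun k => (hGm k).union (hFm k), fun k l hkl => ?_, ?_,
    fun k => subset_union_left, fun k => ?_⟩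
  · simp only [Function.onFun, disjoint_union_left, disjoint_union_right]
    exact ⟨⟨hGd hkl, (hGF l k).symm⟩, hGF k l, hFd hkl⟩
  · simp only [Finset.mem_univ, iUnion_true] at hFU
    rw [iUnion_union_distrib, hFU, union_compl_self]
  · rw [measure_union (hGF k k) (hFm k), hFw k (Finset.mem_univ k),
      add_tsub_cancel_of_le (hGw k)]

theorem exists_equal_measure_partition_ae_subset (hν : IsAtomless ν) {ι κ : Type*} [Fintype ι]
    [Fintype κ] [Nonempty κ] {C : ι → Set Ω} (hCm : ∀ j, MeasurableSet (C j))
    (hCd : Pairwise (Function.onFun Disjoint C)) (σ : κ → Option ι) {w : ℝ≥0∞}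
    (hσ : ∀ j, #{k | σ k = some j} * w ≤ ν (C j)) (hw : Fintype.card κ * w = ν univ) :
    ∃ D : κ → Set Ω, (∀ k, MeasurableSet (D k)) ∧ Pairwise (Function.onFun Disjoint D) ∧
      ⋃ k, D k = univ ∧ (∀ k, ν (D k) = w) ∧ ∀ j k, σ k = some j → ν (D k \ C j) = 0 := by
  have hpieces : ∀ j, ∃ E : κ → Set Ω, (∀ k, MeasurableSet (E k)) ∧ (∀ k, E k ⊆ C j) ∧
      Pairwise (Function.onFun Disjoint E) ∧ ∀ k, ν (E k) = if σ k = some j then w else 0 :=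
    fun j => hν.exists_pairwise_disjoint_subset_measure_eq _ (hCm j)
      (by rw [← Finset.sum_filter, Finset.sum_const, nsmul_eq_mul]; exact hσ j)
  choose E hEm hEC hEd hEw using hpieces
  have hGw : ∀ k, ν (⋃ j, E j k) ≤ w := fun k =>
    calc ν (⋃ j, E j k) ≤ ∑ j, ν (E j k) := measure_iUnion_fintype_le ν _
      _ = ∑ j, if σ k = some j then w else 0 := by simp only [hEw]
      _ ≤ w := by cases σ k <;> simp
  obtain ⟨D, hDm, hDd, hDU, hGD, hDw⟩ := hν.exists_partition_superset_measure_eq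
    (fun k => .iUnion fun j => hEm j k) (pairwise_disjoint_iUnion_of_subset hCd hEC hEd) hGw hw
  refine ⟨D, hDm, hDd, hDU, hDw, fun j k hjk => ?_⟩
  have hED : E j k ⊆ D k := (subset_iUnion (fun j => E j k) j).trans (hGD k)
  have hnull : ν (D k \ E j k) = 0 := by
    rw [measure_sdiff hED (hEm j k).nullMeasurableSet (measure_ne_top ν _), hDw, hEw, if_pos hjk,
      tsub_self]
  exact measure_mono_null (sdiff_subset_sdiff_right (hEC j k)) hnull

end IsAtomless

theorem natCast_floor_mul_toReal_le {c : ℝ} (hc : 0 ≤ c) {x : ℝ≥0∞} (hx : x ≠ ∞) :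
    (⌊c * x.toReal⌋₊ : ℝ≥0∞) ≤ ENNReal.ofReal c * x := by
  rw [← ENNReal.ofReal_natCast, ← ENNReal.ofReal_toReal hx, ← ENNReal.ofReal_mul hc,
    ENNReal.ofReal_toReal hx]
  exact ENNReal.ofReal_le_ofReal (Nat.floor_le (by positivity))

theorem exists_equal_measure_partition_adapted_to_finite_partition_general
    {Ω : Type*} [MeasurableSpace Ω] (ν : Measure Ω) [IsProbabilityMeasure ν]
    (hatomless : ∀ A : Set Ω, MeasurableSet A → 0 < ν A →
      ∃ B ⊆ A, MeasurableSet B ∧ 0 < ν B ∧ ν B < ν A)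
    {m : ℕ} (Cpart : Fin m → Set Ω)
    (hCmeas : ∀ j, MeasurableSet (Cpart j))
    (hCdisj : Pairwise (Function.onFun Disjoint Cpart))
    (n : ℕ) :
    ∃ D : Fin (2 ^ n) → Set Ω,
      (∀ k, MeasurableSet (D k)) ∧
      Pairwise (Function.onFun Disjoint D) ∧
      (⋃ k, D k) = Set.univ ∧
      (∀ k, ν (D k) = (2 ^ n : ℝ≥0∞)⁻¹) ∧
      ∀ j, ⌊(2 ^ n : ℝ) * (ν (Cpart j)).toReal⌋₊ ≤
        (Finset.univ.filter fun k => ν (D k \ Cpart j) = 0).card := by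
  set a : Fin m → ℕ := fun j => ⌊(2 ^ n : ℝ) * (ν (Cpart j)).toReal⌋₊
  have ha : ∀ j, (a j : ℝ≥0∞) ≤ 2 ^ n * ν (Cpart j) := fun j => by
    simpa [ENNReal.ofReal_pow] using
      natCast_floor_mul_toReal_le (by positivity : (0 : ℝ) ≤ 2 ^ n) (measure_ne_top ν (Cpart j))
  have hsum : ∑ j, a j ≤ Fintype.card (Fin (2 ^ n)) := by
    rw [Fintype.card_fin]
    exact_mod_cast calc ((∑ j, a j : ℕ) : ℝ≥0∞)
        ≤ ∑ j, 2 ^ n * ν (Cpart j) := by push_cast; gcongr with j; exact ha j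
      _ = 2 ^ n * ν (⋃ j, Cpart j) := by
        rw [← Finset.mul_sum, measure_iUnion hCdisj hCmeas, tsum_fintype]
      _ ≤ 2 ^ n := mul_le_of_le_one_right' prob_le_one
  obtain ⟨σ, hσ⟩ := exists_option_card_filter_eq a hsum
  obtain ⟨D, hDm, hDd, hDU, hDw, hDC⟩ :=
    IsAtomless.exists_equal_measure_partition_ae_subset hatomless hCmeas hCdisj σ (w := (2 ^ n)⁻¹)
      (fun j => by
        rw [hσ j, ← div_eq_mul_inv, ENNReal.div_le_iff (by positivity) (by finiteness), mul_comm]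
        exact ha j)
      (by simp [ENNReal.mul_inv_cancel])
  refine ⟨D, hDm, hDd, hDU, hDw, fun j => (hσ j).symm.le.trans (Finset.card_le_card ?_)⟩
  intro k hk
  simpa using hDC j k (by simpa using hk)

/-- For an atomless probability measure `ν` and a finite measurable partition `C_1,…,C_m`
of `Ω`, the space can be partitioned into `2^n` measurable sets of equal measure `2^{-n}`
such that, for each `j`, at least `⌊2^n ν(C_j)⌋` of the pieces are ν-essentially contained
in `C_j`. -/
theorem exists_equal_measure_partition_adapted_to_finite_partition
    {Ω : Type*} [MeasurableSpace Ω] (ν : Measure Ω) [IsProbabilityMeasure ν]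
    (hatomless : ∀ A : Set Ω, MeasurableSet A → 0 < ν A →
      ∃ B ⊆ A, MeasurableSet B ∧ 0 < ν B ∧ ν B < ν A)
    {m : ℕ} (Cpart : Fin m → Set Ω)
    (hCmeas : ∀ j, MeasurableSet (Cpart j))
    (hCdisj : Pairwise (Function.onFun Disjoint Cpart))
    (hCcover : (⋃ j, Cpart j) = Set.univ)
    (n : ℕ) :
    ∃ D : Fin (2 ^ n) → Set Ω,
      (∀ k, MeasurableSet (D k)) ∧
      Pairwise (Function.onFun Disjoint D) ∧
      (⋃ k, D k) = Set.univ ∧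
      (∀ k, ν (D k) = (2 ^ n : ℝ≥0∞)⁻¹) ∧
      ∀ j, ⌊(2 ^ n : ℝ) * (ν (Cpart j)).toReal⌋₊ ≤
        (Finset.univ.filter fun k => ν (D k \ Cpart j) = 0).card :=
  exists_equal_measure_partition_adapted_to_finite_partition_general ν hatomless Cpart hCmeas hCdisj
    n
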